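/- For every state |h⟩ of set (5), the post-measurement state (Q_{Aa}Q_{Bb})(|h⟩ ⊗ |F⟩_{ac₁v₁e₁} ⊗ |F⟩_{bc₂v₂e₂}) is nonzero, and the post-measurement states of distinct states of set (5) are pairwise orthogonal. (Step 1 of the proof of Theorem 10: the two local measurements corresponding to outcomes M₁,₁ and M₂,₁ are orthogonality-preserving on set (5) tensored with two four-partite |F⟩ ancilla states.) -/

import Mathlib

noncomputable section

/-- View a coefficient function as a vector of the Euclidean (Hilbert) space. -/
def ofFun {ι : Type*} [Fintype ι] (f : ι → ℂ) : EuclideanSpace ℂ ι := WithLp.toLp 2 f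

/-- Transport an endomorphism of the coefficient functions to the Euclidean space. -/
def toE {ι : Type*} [Fintype ι] (T : (ι → ℂ) →ₗ[ℂ] (ι → ℂ)) :
    Module.End ℂ (EuclideanSpace ℂ ι) :=
  (WithLp.linearEquiv 2 ℂ (ι → ℂ)).symm.toLinearMap ∘ₗ T ∘ₗ
    (WithLp.linearEquiv 2 ℂ (ι → ℂ)).toLinearMap

open Classical in
/-- Diagonal orthogonal projection keeping exactly the basis vectors whose index
satisfies `f`. -/
def diagP {ι : Type*} [Fintype ι] (f : ι → Prop) : Module.End ℂ (EuclideanSpace ℂ ι) :=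
  toE (LinearMap.pi fun i => (if f i then (1 : ℂ) else 0) • LinearMap.proj i)

/-- Tensor product of two vectors, realized on the product index set. -/
def tensE {ι κ : Type*} [Fintype ι] [Fintype κ]
    (u : EuclideanSpace ℂ ι) (w : EuclideanSpace ℂ κ) : EuclideanSpace ℂ (ι × κ) :=
  ofFun fun p => u p.1 * w p.2

/-- The root of unity `ω_n = e^{2πi/n}`. -/
def omegaC (n : ℕ) : ℂ := Complex.exp (2 * Real.pi * Complex.I / n)

/-- Computational basis vector `|k⟩` of `ℂ^d`. -/
def ketD (d k : ℕ) : EuclideanSpace ℂ (Fin d) :=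
  ofFun fun u => if (u : ℕ) = k then 1 else 0

/-- The (unnormalized) vector `|α_i⟩ = Σ_{u=0}^{d−1} ω_d^{iu}|u⟩`. -/
def alphaD (d i : ℕ) : EuclideanSpace ℂ (Fin d) :=
  ofFun fun u => omegaC d ^ (i * (u : ℕ))

/-- The (unnormalized) vector `|γ_m⟩ = Σ_{u=0}^{d−2} ω_{d−1}^{mu}|u+1⟩`. -/
def gammaD (d m : ℕ) : EuclideanSpace ℂ (Fin d) :=
  ofFun fun u => if (u : ℕ) = 0 then 0 else omegaC (d - 1) ^ (m * ((u : ℕ) - 1))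

/-- Tensor product of five vectors of `ℂ^d`, realized on the index set `Fin 5 → Fin d`. -/
def tp5 {d : ℕ} (v0 v1 v2 v3 v4 : EuclideanSpace ℂ (Fin d)) :
    EuclideanSpace ℂ (Fin 5 → Fin d) :=
  ofFun fun x => v0 (x 0) * v1 (x 1) * v2 (x 2) * v3 (x 3) * v4 (x 4)

/-- The states of set (5): family `k : Fin 10` corresponds to `H_{k+1}`; the parameter
`a` is the spectral parameter (`i ∈ ℤ_d` for `H₁,…,H₅`, `m ∈ ℤ_{d−1}` for `H₆,…,H₁₀`),
and `p` is the index of the computational basis vector `|p⟩ ∈ {|1⟩,…,|d−1⟩}`. -/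
def stateOf (d : ℕ) (k : Fin 10) (a p : ℕ) : EuclideanSpace ℂ (Fin 5 → Fin d) :=
  if k = 0 then tp5 (alphaD d a) (alphaD d a) (ketD d p) (ketD d 0) (ketD d 0)
  else if k = 1 then tp5 (alphaD d a) (ketD d p) (ketD d 0) (ketD d 0) (alphaD d a)
  else if k = 2 then tp5 (ketD d p) (ketD d 0) (ketD d 0) (alphaD d a) (alphaD d a)
  else if k = 3 then tp5 (ketD d 0) (ketD d 0) (alphaD d a) (alphaD d a) (ketD d p)
  else if k = 4 then tp5 (ketD d 0) (alphaD d a) (alphaD d a) (ketD d p) (ketD d 0)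
  else if k = 5 then tp5 (gammaD d a) (ketD d 0) (ketD d p) (ketD d 0) (ketD d 1)
  else if k = 6 then tp5 (ketD d 0) (ketD d p) (ketD d 0) (ketD d 1) (gammaD d a)
  else if k = 7 then tp5 (ketD d p) (ketD d 0) (ketD d 1) (gammaD d a) (ketD d 0)
  else if k = 8 then tp5 (ketD d 0) (ketD d 1) (gammaD d a) (ketD d 0) (ketD d p)
  else tp5 (ketD d 1) (gammaD d a) (ketD d 0) (ketD d p) (ketD d 0)

/-- Ranges of the parameters of the states of set (5). -/
def validIdx (d : ℕ) (k : Fin 10) (a p : ℕ) : Prop :=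
  (if (k : ℕ) < 5 then a < d else a < d - 1) ∧ 1 ≤ p ∧ p < d

/-- The full Hilbert space: five `ℂ^d` subsystems `A,B,C,D,E` (positions `0,…,4`),
ancilla qubits `a,b` (first `Fin 2 → Fin 2` factor, attached to `A,B`), ancilla
qubits `c₁,c₂` (second factor, held by Charlie), `v₁,v₂` (third factor, held by
Dave), and `e₁,e₂` (fourth factor, held by Eve). -/
abbrev WF (d : ℕ) : Type :=
  EuclideanSpace ℂ
    ((Fin 5 → Fin d) ×
      ((Fin 2 → Fin 2) × (Fin 2 → Fin 2) × (Fin 2 → Fin 2) × (Fin 2 → Fin 2)))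

/-- The ancilla state `|F⟩_{ac₁v₁e₁} ⊗ |F⟩_{bc₂v₂e₂}`, where
`|F⟩ = (|0000⟩+|1111⟩)/√2`. -/
def ancF :
    EuclideanSpace ℂ
      ((Fin 2 → Fin 2) × (Fin 2 → Fin 2) × (Fin 2 → Fin 2) × (Fin 2 → Fin 2)) :=
  ofFun fun q =>
    ∏ k : Fin 2,
      (if q.1 k = q.2.1 k ∧ q.2.1 k = q.2.2.1 k ∧ q.2.2.1 k = q.2.2.2 k then
        (Real.sqrt 2 : ℂ)⁻¹ else 0)

/-- The measurement projector
`Q_{Xx} = |0⟩⟨0|_X ⊗ |0⟩⟨0|_x + (Σ_{k=1}^{d−1}|k⟩⟨k|_X) ⊗ |1⟩⟨1|_x`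
on the main subsystem at position `X` and its ancilla qubit at position `j`. -/
def QprojF (d : ℕ) (X : Fin 5) (j : Fin 2) : Module.End ℂ (WF d) :=
  diagP fun q => ((q.1 X : ℕ) = 0 ∧ q.2.1 j = 0) ∨ ((q.1 X : ℕ) ≠ 0 ∧ q.2.1 j = 1)

/-- The post-measurement state
`(Q_{Aa}Q_{Bb})(|h⟩ ⊗ |F⟩_{ac₁v₁e₁} ⊗ |F⟩_{bc₂v₂e₂})`. -/
def postF (d : ℕ) (h : EuclideanSpace ℂ (Fin 5 → Fin d)) : WF d :=
  (QprojF d 0 0 * QprojF d 1 1) (tensE h ancF)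


set_option maxHeartbeats 3000000

lemma omega_pow_n {n : ℕ} (hn : 0 < n) : omegaC n ^ n = 1 := by
  have hn' : (n:ℂ) ≠ 0 := Nat.cast_ne_zero.2 hn.ne'
  rw [omegaC, ← Complex.exp_nat_mul,
    show (n:ℂ) * (2 * Real.pi * Complex.I / n) = 2 * Real.pi * Complex.I by field_simp,
    Complex.exp_two_pi_mul_I]

/-!
Each `|F⟩` is a GHZ state, so on a basis state `|x⟩` of `ABCDE` the projector `Q_{Aa}`
(resp. `Q_{Bb}`) keeps exactly one branch of the first (resp. second) `|F⟩`: the one whose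
bit records whether `x_A` (resp. `x_B`) vanishes. The ancilla thus collapses to a basis state
determined by `x`, with amplitude `1/2`, so the measurement multiplies all inner products by
`1/4`, and it suffices that the states of set (5) are nonzero and pairwise orthogonal. Within a
family this comes from `⟨p|p'⟩ = 0` and the discrete Fourier orthogonality of the `|α_i⟩`
(resp. `|γ_m⟩`); two different families always differ in a tensor factor where one carries
`|0⟩` and the other `|1⟩`, `|p⟩` or `|γ_m⟩`, all orthogonal to `|0⟩`.
-/

open Finset ComplexConjugate

lemma isPrimitiveRoot_omegaC {n : ℕ} (hn : n ≠ 0) : IsPrimitiveRoot (omegaC n) n :=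
  Complex.isPrimitiveRoot_exp n hn

lemma IsPrimitiveRoot.sum_conj_pow_mul_pow_eq_zero {ζ : ℂ} {n i j : ℕ}
    (hζ : IsPrimitiveRoot ζ n) (hi : i < n) (hj : j < n) (hij : i ≠ j) :
    ∑ t ∈ range n, conj (ζ ^ (i * t)) * ζ ^ (j * t) = 0 := by
  have hn : n ≠ 0 := by omega
  have hconj : conj ζ = ζ⁻¹ := (Complex.inv_eq_conj (hζ.norm'_eq_one hn)).symm
  set w := ζ⁻¹ ^ i * ζ ^ j
  have hterm : ∀ t, conj (ζ ^ (i * t)) * ζ ^ (j * t) = w ^ t := fun t => by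
    rw [map_pow, hconj, mul_pow, ← pow_mul, ← pow_mul]
  have hw_pow : w ^ n = 1 := by
    calc w ^ n = ((ζ ^ n) ^ i)⁻¹ * (ζ ^ n) ^ j := by ring
      _ = 1 := by rw [hζ.pow_eq_one]; simp
  have hw_ne : w ≠ 1 := fun hw => hij <| hζ.pow_inj hi hj <| by
    rw [← inv_mul_eq_one₀ (pow_ne_zero i (hζ.ne_zero hn)), ← hw, ← inv_pow]
  simp only [hterm, geom_sum_eq hw_ne, hw_pow, sub_self, zero_div]

lemma inner_eq_sum_conj_mul {ι : Type*} [Fintype ι] (x y : EuclideanSpace ℂ ι) :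
    inner ℂ x y = ∑ i, conj (x i) * y i := by
  simp only [PiLp.inner_apply, RCLike.inner_apply, mul_comm]

lemma inner_ketD_of_ne {d p q : ℕ} (hpq : p ≠ q) : inner ℂ (ketD d p) (ketD d q) = 0 := by
  rw [inner_eq_sum_conj_mul]
  refine sum_eq_zero fun u _ => ?_
  by_cases hu : (u : ℕ) = p <;> simp [ketD, ofFun, hu, hpq]

lemma inner_alphaD_of_ne {d i j : ℕ} (hi : i < d) (hj : j < d) (hij : i ≠ j) :
    inner ℂ (alphaD d i) (alphaD d j) = 0 := by
  rw [inner_eq_sum_conj_mul,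
    ← (isPrimitiveRoot_omegaC (by omega)).sum_conj_pow_mul_pow_eq_zero hi hj hij,
    ← Fin.sum_univ_eq_sum_range]
  simp only [alphaD, ofFun]

lemma inner_gammaD_of_ne {d m m' : ℕ} (hm : m < d - 1) (hm' : m' < d - 1) (hmm' : m ≠ m') :
    inner ℂ (gammaD d m) (gammaD d m') = 0 := by
  obtain ⟨n, rfl⟩ : ∃ n, d = n + 1 := ⟨d - 1, by omega⟩
  rw [Nat.add_sub_cancel] at hm hm'
  rw [inner_eq_sum_conj_mul, Fin.sum_univ_succ,
    ← (isPrimitiveRoot_omegaC (by omega)).sum_conj_pow_mul_pow_eq_zero hm hm' hmm',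
    ← Fin.sum_univ_eq_sum_range]
  simp [gammaD, ofFun]

lemma inner_gammaD_ketD_zero (d m : ℕ) : inner ℂ (gammaD d m) (ketD d 0) = 0 := by
  rw [inner_eq_sum_conj_mul]
  refine sum_eq_zero fun u _ => ?_
  by_cases hu : (u : ℕ) = 0 <;> simp [gammaD, ketD, ofFun, hu]

lemma inner_ketD_zero_gammaD (d m : ℕ) : inner ℂ (ketD d 0) (gammaD d m) = 0 := by
  rw [← inner_conj_symm, inner_gammaD_ketD_zero, map_zero]

lemma ketD_ne_zero {d p : ℕ} (hp : p < d) : ketD d p ≠ 0 := fun h => by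
  simpa [ketD, ofFun] using congrArg (· ⟨p, hp⟩) h

lemma alphaD_ne_zero {d : ℕ} (hd : 0 < d) (i : ℕ) : alphaD d i ≠ 0 := fun h => by
  simpa [alphaD, ofFun] using congrArg (· ⟨0, hd⟩) h

lemma gammaD_ne_zero {d : ℕ} (hd : 1 < d) (m : ℕ) : gammaD d m ≠ 0 := fun h => by
  simpa [gammaD, ofFun] using congrArg (· ⟨1, hd⟩) h

lemma inner_tp5 {d : ℕ} (v₀ v₁ v₂ v₃ v₄ w₀ w₁ w₂ w₃ w₄ : EuclideanSpace ℂ (Fin d)) :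
    inner ℂ (tp5 v₀ v₁ v₂ v₃ v₄) (tp5 w₀ w₁ w₂ w₃ w₄) =
      inner ℂ v₀ w₀ * inner ℂ v₁ w₁ * inner ℂ v₂ w₂ * inner ℂ v₃ w₃ * inner ℂ v₄ w₄ := by
  let v : Fin 5 → EuclideanSpace ℂ (Fin d) := ![v₀, v₁, v₂, v₃, v₄]
  let w : Fin 5 → EuclideanSpace ℂ (Fin d) := ![w₀, w₁, w₂, w₃, w₄]
  calc inner ℂ (tp5 v₀ v₁ v₂ v₃ v₄) (tp5 w₀ w₁ w₂ w₃ w₄)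
      = ∑ x : Fin 5 → Fin d, ∏ k, conj (v k (x k)) * w k (x k) := by
        rw [inner_eq_sum_conj_mul]
        refine sum_congr rfl fun x _ => ?_
        simp only [tp5, ofFun, map_mul, Fin.prod_univ_five, v, w, Matrix.cons_val]
        ring
    _ = ∏ k, inner ℂ (v k) (w k) := by
        simp only [inner_eq_sum_conj_mul, Fintype.prod_sum]
    _ = _ := by simp [Fin.prod_univ_five, v, w]

lemma tp5_ne_zero {d : ℕ} {v₀ v₁ v₂ v₃ v₄ : EuclideanSpace ℂ (Fin d)} (h₀ : v₀ ≠ 0)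
    (h₁ : v₁ ≠ 0) (h₂ : v₂ ≠ 0) (h₃ : v₃ ≠ 0) (h₄ : v₄ ≠ 0) : tp5 v₀ v₁ v₂ v₃ v₄ ≠ 0 := by
  rw [← inner_self_ne_zero (𝕜 := ℂ), inner_tp5]
  simp only [ne_eq, mul_eq_zero, inner_self_eq_zero, not_or]
  exact ⟨⟨⟨⟨h₀, h₁⟩, h₂⟩, h₃⟩, h₄⟩

lemma stateOf_ne_zero {d : ℕ} {k : Fin 10} {a p : ℕ} (hv : validIdx d k a p) :
    stateOf d k a p ≠ 0 := by
  obtain ⟨ha, hp, hpd⟩ := hv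
  fin_cases k <;> simp only [Nat.reduceLT, ↓reduceIte] at ha <;>
    simp only [stateOf, Fin.reduceFinMk, Fin.isValue, Fin.reduceEq, ↓reduceIte] <;>
    apply tp5_ne_zero <;>
    first
    | exact ketD_ne_zero (by omega)
    | exact alphaD_ne_zero (by omega) a
    | exact gammaD_ne_zero (by omega) a

lemma inner_stateOf_eq_zero {d : ℕ} {k k' : Fin 10} {a p a' p' : ℕ}
    (hv : validIdx d k a p) (hv' : validIdx d k' a' p') (hne : (k, a, p) ≠ (k', a', p')) :
    inner ℂ (stateOf d k a p) (stateOf d k' a' p') = 0 := by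
  obtain ⟨ha, hp, -⟩ := hv
  obtain ⟨ha', hp', -⟩ := hv'
  by_cases hk : k = k'
  · subst hk
    obtain haa | hpp : a ≠ a' ∨ p ≠ p' := by
      by_contra! h
      exact hne (by rw [h.1, h.2])
    · fin_cases k <;> simp only [Nat.reduceLT, ↓reduceIte] at ha ha' <;>
        simp only [stateOf, Fin.reduceFinMk, Fin.isValue, Fin.reduceEq, ↓reduceIte, inner_tp5] <;>
        (first
          | rw [inner_alphaD_of_ne ha ha' haa]
          | rw [inner_gammaD_of_ne ha ha' haa]) <;>
        simp only [mul_zero, zero_mul]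
    · fin_cases k <;>
        simp only [stateOf, Fin.reduceFinMk, Fin.isValue, Fin.reduceEq, ↓reduceIte, inner_tp5,
          inner_ketD_of_ne hpp, mul_zero, zero_mul]
  · have hp0 : inner ℂ (ketD d p) (ketD d 0) = 0 := inner_ketD_of_ne (by omega)
    have h0p : inner ℂ (ketD d 0) (ketD d p') = 0 := inner_ketD_of_ne (by omega)
    have h01 : inner ℂ (ketD d 0) (ketD d 1) = 0 := inner_ketD_of_ne (by omega)
    have h10 : inner ℂ (ketD d 1) (ketD d 0) = 0 := inner_ketD_of_ne (by omega)
    fin_cases k <;> fin_cases k' <;> first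
      | exact absurd rfl hk
      | simp only [stateOf, Fin.reduceFinMk, Fin.isValue, Fin.reduceEq, ↓reduceIte, inner_tp5,
          hp0, h0p, h01, h10, inner_gammaD_ketD_zero, inner_ketD_zero_gammaD, mul_zero, zero_mul]

open Classical in
lemma diagP_apply {ι : Type*} [Fintype ι] (f : ι → Prop) (v : EuclideanSpace ℂ ι) (i : ι) :
    diagP f v i = if f i then v i else 0 := by
  by_cases h : f i <;> simp [diagP, toE, h, WithLp.linearEquiv]

lemma ancF_apply (q : (Fin 2 → Fin 2) × (Fin 2 → Fin 2) × (Fin 2 → Fin 2) × (Fin 2 → Fin 2)) :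
    ancF q = if q = (q.1, q.1, q.1, q.1) then 2⁻¹ else 0 := by
  obtain ⟨g₁, g₂, g₃, g₄⟩ := q
  have hsqrt : ((Real.sqrt 2 : ℂ)⁻¹) ^ 2 = 2⁻¹ := by
    rw [inv_pow, ← Complex.ofReal_pow, Real.sq_sqrt zero_le_two, Complex.ofReal_ofNat]
  simp only [ancF, ofFun, prod_ite_zero, prod_const, card_univ, Fintype.card_fin, hsqrt,
    Prod.mk.injEq, true_and, funext_iff]
  congr 1
  grind

def outcomeBit {d : ℕ} (u : Fin d) : Fin 2 := if (u : ℕ) = 0 then 0 else 1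

def collapsedAncilla {d : ℕ} (x : Fin 5 → Fin d) :
    (Fin 2 → Fin 2) × (Fin 2 → Fin 2) × (Fin 2 → Fin 2) × (Fin 2 → Fin 2) :=
  let g := ![outcomeBit (x 0), outcomeBit (x 1)]
  (g, g, g, g)

lemma postF_apply (d : ℕ) (h : EuclideanSpace ℂ (Fin 5 → Fin d)) (x : Fin 5 → Fin d)
    (q : (Fin 2 → Fin 2) × (Fin 2 → Fin 2) × (Fin 2 → Fin 2) × (Fin 2 → Fin 2)) :
    postF d h (x, q) = if q = collapsedAncilla x then h x / 2 else 0 := by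
  simp only [postF, Module.End.mul_apply, QprojF, diagP_apply, tensE, ofFun, ancF_apply]
  obtain ⟨g₁, g₂, g₃, g₄⟩ := q
  simp only [collapsedAncilla, outcomeBit, Prod.mk.injEq, funext_iff, Fin.forall_fin_two,
    Matrix.cons_val_zero, Matrix.cons_val_one, true_and]
  split_ifs <;> grind

lemma inner_postF (d : ℕ) (h h' : EuclideanSpace ℂ (Fin 5 → Fin d)) :
    inner ℂ (postF d h) (postF d h') = 4⁻¹ * inner ℂ h h' := by
  rw [inner_eq_sum_conj_mul, inner_eq_sum_conj_mul h h', Fintype.sum_prod_type, mul_sum]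
  refine sum_congr rfl fun x _ => ?_
  simp only [postF_apply, apply_ite conj, map_zero, ite_mul, zero_mul, mul_ite, mul_zero,
    sum_ite_eq', mem_univ, ↓reduceIte, map_div₀, map_ofNat]
  ring

lemma postF_ne_zero {d : ℕ} {h : EuclideanSpace ℂ (Fin 5 → Fin d)} (hh : h ≠ 0) :
    postF d h ≠ 0 := by
  rw [← inner_self_ne_zero (𝕜 := ℂ), inner_postF]
  exact mul_ne_zero (by norm_num) (inner_self_ne_zero.mpr hh)

theorem thm10_step1_orthogonality_preserving_general (d : ℕ) :
    (∀ (k : Fin 10) (a p : ℕ), validIdx d k a p → postF d (stateOf d k a p) ≠ 0) ∧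
    (∀ (k k' : Fin 10) (a p a' p' : ℕ), validIdx d k a p → validIdx d k' a' p' →
      (k, a, p) ≠ (k', a', p') →
      (inner ℂ (postF d (stateOf d k a p)) (postF d (stateOf d k' a' p')) : ℂ) = 0) :=
  ⟨fun _ _ _ hv => postF_ne_zero (stateOf_ne_zero hv), fun _ _ _ _ _ _ hv hv' hne => by
    rw [inner_postF, inner_stateOf_eq_zero hv hv' hne, mul_zero]⟩

/-- Step 1 of Theorem 10: the post-measurement states of set (5),
with two four-partite `|F⟩` ancilla states, are nonzero and pairwise orthogonal. -/
theorem thm10_step1_orthogonality_preserving (d : ℕ) (hd : 3 ≤ d) :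
    (∀ (k : Fin 10) (a p : ℕ), validIdx d k a p → postF d (stateOf d k a p) ≠ 0) ∧
    (∀ (k k' : Fin 10) (a p a' p' : ℕ), validIdx d k a p → validIdx d k' a' p' →
      (k, a, p) ≠ (k', a', p') →
      (inner ℂ (postF d (stateOf d k a p)) (postF d (stateOf d k' a' p')) : ℂ) = 0) :=
  thm10_step1_orthogonality_preserving_general d
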